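/- Let G be a (2K2, K1+P4)-free graph. Then χ(G) ≤ ω(G) + 2. -/

import Mathlib

/-!
Let `K` be a maximum clique and `v ∈ K`. The neighbourhood `N(v)` induces a `(2K₂, P₄)`-free
graph (a `P₄` in it together with `v` would be a gem), and such graphs satisfy `χ = ω`: the
non-neighbours of a vertex of minimum degree are complete to its neighbours, so the graph is a
join of two smaller ones or has an isolated vertex. As cliques of `N(v)` extend by `v`, `N(v)`
needs at most `ω - 1` colours.

Outside `N(v)`, every `u ∈ K \ {v}` is adjacent to exactly one end of each edge `ab`: to at
least one, as `G` is `2K₂`-free; and if some `u₀` saw both ends, then by gem-freeness (a gem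
centred at `u₀` on the path `v, u, a, b`) so would every vertex of `K \ {v}`, and
`(K \ {v}) ∪ {a, b}` would be a clique of size `ω + 1`. So adjacency to a fixed `u₀` is a
proper 2-colouring of the complement of `N(v)`, and `χ(G) ≤ ω(G) + 1`.
-/

open SimpleGraph

/-- `G` contains no induced subgraph isomorphic to `H` (graph embeddings are
exactly the inclusions of induced subgraphs). -/
def IndFree {W V : Type*} (H : SimpleGraph W) (G : SimpleGraph V) : Prop :=
  IsEmpty (H ↪g G)

/-- A set of vertices is independent if its elements are pairwise nonadjacent. -/
def IsIndep {V : Type*} (G : SimpleGraph V) (s : Set V) : Prop :=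
  s.Pairwise fun u v => ¬ G.Adj u v

/-- A graph is perfect if every induced subgraph has chromatic number equal to
its clique number. -/
def IsPerfect {V : Type*} (G : SimpleGraph V) : Prop :=
  ∀ S : Set V, (G.induce S).chromaticNumber = ((G.induce S).cliqueNum : ℕ∞)

/-- `2K₂`: two disjoint edges `{0,1}` and `{2,3}`. -/
def graph2K2 : SimpleGraph (Fin 4) :=
  SimpleGraph.fromRel (fun a b => (a = 0 ∧ b = 1) ∨ (a = 2 ∧ b = 3))

/-- The path `P₄`. -/
def graphP4 : SimpleGraph (Fin 4) :=
  SimpleGraph.fromRel (fun a b => (a = 0 ∧ b = 1) ∨ (a = 1 ∧ b = 2) ∨ (a = 2 ∧ b = 3))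

/-- The path `P₃`. -/
def graphP3 : SimpleGraph (Fin 3) :=
  SimpleGraph.fromRel (fun a b => (a = 0 ∧ b = 1) ∨ (a = 1 ∧ b = 2))

/-- `P₄ ∪ K₁`: a path on `{0,1,2,3}` plus the isolated vertex `4`. -/
def graphP4K1 : SimpleGraph (Fin 5) :=
  SimpleGraph.fromRel (fun a b => (a = 0 ∧ b = 1) ∨ (a = 1 ∧ b = 2) ∨ (a = 2 ∧ b = 3))

/-- The cycle `C₄`. -/
def graphC4 : SimpleGraph (Fin 4) :=
  SimpleGraph.fromRel
    (fun a b => (a = 0 ∧ b = 1) ∨ (a = 1 ∧ b = 2) ∨ (a = 2 ∧ b = 3) ∨ (a = 3 ∧ b = 0))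

/-- The gem `K₁ + P₄`: a path on `{0,1,2,3}` plus the universal vertex `4`. -/
def graphGem : SimpleGraph (Fin 5) :=
  SimpleGraph.fromRel
    (fun a b => (a = 0 ∧ b = 1) ∨ (a = 1 ∧ b = 2) ∨ (a = 2 ∧ b = 3) ∨ (a ≠ 4 ∧ b = 4))

/-- The wheel `K₁ + C₄`: a 4-cycle on `{0,1,2,3}` plus the universal vertex `4`. -/
def graphWheel : SimpleGraph (Fin 5) :=
  SimpleGraph.fromRel
    (fun a b => (a = 0 ∧ b = 1) ∨ (a = 1 ∧ b = 2) ∨ (a = 2 ∧ b = 3) ∨ (a = 3 ∧ b = 0) ∨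
      (a ≠ 4 ∧ b = 4))

/-- `P₂ ∪ P₃`: the edge `{0,1}` together with the path `2 - 3 - 4`. -/
def graphP2P3 : SimpleGraph (Fin 5) :=
  SimpleGraph.fromRel (fun a b => (a = 0 ∧ b = 1) ∨ (a = 2 ∧ b = 3) ∨ (a = 3 ∧ b = 4))

/-- `P₂ ∪ P₄`: the edge `{0,1}` together with the path `2 - 3 - 4 - 5`. -/
def graphP2P4 : SimpleGraph (Fin 6) :=
  SimpleGraph.fromRel
    (fun a b => (a = 0 ∧ b = 1) ∨ (a = 2 ∧ b = 3) ∨ (a = 3 ∧ b = 4) ∨ (a = 4 ∧ b = 5))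

/-- `HVN`: `K₄` on `{0,1,2,3}` plus a vertex `4` adjacent to exactly `0` and `1`. -/
def graphHVN : SimpleGraph (Fin 5) :=
  SimpleGraph.fromRel (fun a b => (a < 4 ∧ b < 4) ∨ (a = 4 ∧ (b = 0 ∨ b = 1)))

/-- `K₅ - e`: the complete graph on 5 vertices minus the edge `{0,1}`. -/
def graphK5e : SimpleGraph (Fin 5) :=
  SimpleGraph.fromRel (fun a b => ¬((a = 0 ∧ b = 1) ∨ (a = 1 ∧ b = 0)))

/-- The diamond `K₄ - e`: the complete graph on 4 vertices minus the edge `{0,2}`. -/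
def graphDiamond : SimpleGraph (Fin 4) :=
  SimpleGraph.fromRel (fun a b => ¬((a = 0 ∧ b = 2) ∨ (a = 2 ∧ b = 0)))

/-- The paw: a triangle `{0,1,2}` plus a pendant vertex `3` adjacent to `0`. -/
def graphPaw : SimpleGraph (Fin 4) :=
  SimpleGraph.fromRel
    (fun a b => (a = 0 ∧ b = 1) ∨ (a = 1 ∧ b = 2) ∨ (a = 0 ∧ b = 2) ∨ (a = 0 ∧ b = 3))

/-- `K₅`. -/
def graphK5 : SimpleGraph (Fin 5) := ⊤

/-- The join `K₁ + H`: `H` together with a new universal vertex `none`. -/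
def joinK1 {W : Type*} (H : SimpleGraph W) : SimpleGraph (Option W) :=
  SimpleGraph.fromRel
    (fun a b => (∃ u v, a = some u ∧ b = some v ∧ H.Adj u v) ∨ a = none)

/-- A pseudo-split graph is a `(2K₂, C₄)`-free graph. -/
def IsPseudoSplit {V : Type*} (G : SimpleGraph V) : Prop :=
  IndFree graph2K2 G ∧ IndFree graphC4 G

namespace IndFree

variable {W V : Type*} {H : SimpleGraph W} {G : SimpleGraph V}

theorem false_of_adj_iff (hfree : IndFree H G)
    (hH : ∀ i j, i ≠ j → ¬H.Adj i j → ∃ k, ¬(H.Adj i k ↔ H.Adj j k))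
    (f : W → V) (hf : ∀ i j, G.Adj (f i) (f j) ↔ H.Adj i j) : False := by
  refine hfree.false ⟨⟨f, fun i j hij => ?_⟩, hf _ _⟩
  by_contra hne
  by_cases hadj : H.Adj i j
  · exact G.irrefl (hij ▸ (hf i j).2 hadj)
  · obtain ⟨k, hk⟩ := hH i j hne hadj
    exact hk ((hf i k).symm.trans (hij ▸ hf j k))

theorem induce (hfree : IndFree H G) (s : Set V) : IndFree H (G.induce s) :=
  ⟨fun e => hfree.false ((Embedding.induce s).comp e)⟩

theorem false_of_2K2 (hfree : IndFree graph2K2 G) {a b c d : V}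
    (hab : G.Adj a b) (hcd : G.Adj c d)
    (hac : ¬G.Adj a c) (had : ¬G.Adj a d) (hbc : ¬G.Adj b c) (hbd : ¬G.Adj b d) : False :=
  hfree.false_of_adj_iff (by simp only [graph2K2, fromRel_adj]; decide) ![a, b, c, d] (by
    intro i j
    fin_cases i <;> fin_cases j <;>
      simp [graph2K2, hab, hcd, hab.symm, hcd.symm, hac, had, hbc, hbd,
        mt G.adj_symm hac, mt G.adj_symm had, mt G.adj_symm hbc, mt G.adj_symm hbd])

theorem false_of_P4 (hfree : IndFree graphP4 G) {a b c d : V}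
    (hab : G.Adj a b) (hbc : G.Adj b c) (hcd : G.Adj c d)
    (hac : ¬G.Adj a c) (had : ¬G.Adj a d) (hbd : ¬G.Adj b d) : False :=
  hfree.false_of_adj_iff (by simp only [graphP4, fromRel_adj]; decide) ![a, b, c, d] (by
    intro i j
    fin_cases i <;> fin_cases j <;>
      simp [graphP4, hab, hbc, hcd, hab.symm, hbc.symm, hcd.symm, hac, had, hbd,
        mt G.adj_symm hac, mt G.adj_symm had, mt G.adj_symm hbd])

set_option synthInstance.maxSize 1024 in
theorem false_of_gem (hfree : IndFree graphGem G) {a b c d e : V}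
    (hab : G.Adj a b) (hbc : G.Adj b c) (hcd : G.Adj c d)
    (hac : ¬G.Adj a c) (had : ¬G.Adj a d) (hbd : ¬G.Adj b d)
    (hae : G.Adj a e) (hbe : G.Adj b e) (hce : G.Adj c e) (hde : G.Adj d e) : False :=
  hfree.false_of_adj_iff (by simp only [graphGem, fromRel_adj]; decide) ![a, b, c, d, e] (by
    intro i j
    fin_cases i <;> fin_cases j <;>
      simp [graphGem, hab, hbc, hcd, hab.symm, hbc.symm, hcd.symm, hac, had, hbd,
        mt G.adj_symm hac, mt G.adj_symm had, mt G.adj_symm hbd,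
        hae, hbe, hce, hde, hae.symm, hbe.symm, hce.symm, hde.symm])

end IndFree

namespace SimpleGraph

variable {V α : Type*} {G : SimpleGraph V} {s : Set V}

def Coloring.glue [DecidablePred (· ∈ s)] (c₁ : (G.induce s).Coloring α)
    (c₂ : (G.induce sᶜ).Coloring α)
    (h : ∀ a (ha : a ∈ s) b (hb : b ∉ s), G.Adj a b → c₁ ⟨a, ha⟩ ≠ c₂ ⟨b, hb⟩) :
    G.Coloring α :=
  Coloring.mk (fun x => if hx : x ∈ s then c₁ ⟨x, hx⟩ else c₂ ⟨x, hx⟩) fun {x y} hxy => by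
    by_cases hx : x ∈ s <;> by_cases hy : y ∈ s <;> simp only [hx, hy, dite_true, dite_false]
    · exact c₁.valid hxy
    · exact h x hx y hy hxy
    · exact (h y hy x hx hxy.symm).symm
    · exact c₂.valid hxy

theorem Colorable.add_of_induce {m n : ℕ} (hs : (G.induce s).Colorable m)
    (hsc : (G.induce sᶜ).Colorable n) : G.Colorable (m + n) := by
  classical
  obtain ⟨c₁⟩ := hs
  obtain ⟨c₂⟩ := hsc
  let c : G.Coloring (Fin m ⊕ Fin n) :=
    Coloring.glue (recolorOfEmbedding _ ⟨Sum.inl, Sum.inl_injective⟩ c₁)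
      (recolorOfEmbedding _ ⟨Sum.inr, Sum.inr_injective⟩ c₂) fun _ _ _ _ _ => Sum.inl_ne_inr
  simpa using c.colorable

theorem Colorable.of_induce_of_forall_not_adj {n : ℕ} (hs : (G.induce s).Colorable n)
    (hsc : (G.induce sᶜ).Colorable n) (h : ∀ a ∈ s, ∀ b ∉ s, ¬G.Adj a b) : G.Colorable n := by
  classical
  obtain ⟨c₁⟩ := hs
  obtain ⟨c₂⟩ := hsc
  exact ⟨Coloring.glue c₁ c₂ fun a ha b hb hab => absurd hab (h a ha b hb)⟩

theorem cliqueNum_induce_add_cliqueNum_induce_compl_le [Finite V]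
    (h : ∀ a ∈ s, ∀ b ∉ s, G.Adj a b) :
    (G.induce s).cliqueNum + (G.induce sᶜ).cliqueNum ≤ G.cliqueNum := by
  classical
  obtain ⟨t₁, ht₁⟩ := (G.induce s).exists_isNClique_cliqueNum
  obtain ⟨t₂, ht₂⟩ := (G.induce sᶜ).exists_isNClique_cliqueNum
  rw [isNClique_induce_iff] at ht₁ ht₂
  have hs₁ : ∀ a ∈ t₁.map (.subtype _), a ∈ s := by
    intro a ha
    obtain ⟨a, -, rfl⟩ := Finset.mem_map.1 ha
    exact a.2
  have hs₂ : ∀ b ∈ t₂.map (.subtype _), b ∉ s := by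
    intro b hb
    obtain ⟨b, -, rfl⟩ := Finset.mem_map.1 hb
    exact b.2
  have hdisj : Disjoint (t₁.map (.subtype _)) (t₂.map (.subtype _)) :=
    Finset.disjoint_left.2 fun a ha₁ ha₂ => hs₂ a ha₂ (hs₁ a ha₁)
  have hclique : G.IsClique (t₁.map (.subtype _) ∪ t₂.map (.subtype _) : Finset V) := by
    rw [Finset.coe_union, IsClique, Set.pairwise_union]
    refine ⟨ht₁.isClique, ht₂.isClique, fun a ha b hb _ => ?_⟩
    have hab := h a (hs₁ a ha) b (hs₂ b hb)
    exact ⟨hab, hab.symm⟩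
  calc _ = (t₁.map (.subtype _) ∪ t₂.map (.subtype _)).card := by
        rw [Finset.card_union_of_disjoint hdisj, ht₁.card_eq, ht₂.card_eq]
    _ ≤ G.cliqueNum := hclique.card_le_cliqueNum

theorem cliqueNum_pos [Finite V] [Nonempty V] : 0 < G.cliqueNum := by
  obtain ⟨v⟩ := ‹Nonempty V›
  exact IsClique.card_le_cliqueNum (G := G) (t := {v}) (tc := by simp)

theorem cliqueNum_induce_neighborSet_lt [Finite V] (v : V) :
    (G.induce (G.neighborSet v)).cliqueNum < G.cliqueNum := by
  classical
  obtain ⟨t, ht⟩ := (G.induce (G.neighborSet v)).exists_isNClique_cliqueNum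
  rw [isNClique_induce_iff] at ht
  have hvt : v ∉ t.map (.subtype _) := fun hv => by
    obtain ⟨x, -, hx⟩ := Finset.mem_map.1 hv
    exact G.ne_of_adj x.2 hx.symm
  have hclique : G.IsClique (insert v (t.map (.subtype _)) : Finset V) := by
    rw [Finset.coe_insert, isClique_insert]
    refine ⟨ht.isClique, fun u hu _ => ?_⟩
    obtain ⟨x, -, rfl⟩ := Finset.mem_map.1 hu
    exact x.2
  have := hclique.card_le_cliqueNum
  rwa [Finset.card_insert_of_notMem hvt, ht.card_eq, Nat.add_one_le_iff] at this

end SimpleGraph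

section Cograph

variable {V : Type*} {H : SimpleGraph V}

theorem adj_of_degree_le_of_not_adj [Fintype V] [DecidableRel H.Adj]
    (h2K2 : IndFree graph2K2 H) (hP4 : IndFree graphP4 H) {v x u : V}
    (hdeg : H.degree v ≤ H.degree x) (hx : ¬H.Adj v x) (hu : H.Adj v u) : H.Adj x u := by
  classical
  by_contra hxu
  have hsub : H.neighborFinset x ⊆ (H.neighborFinset v).erase u := by
    intro z hz
    rw [mem_neighborFinset] at hz
    rw [Finset.mem_erase, mem_neighborFinset]
    refine ⟨by rintro rfl; exact hxu hz, by_contra fun hvz => ?_⟩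
    by_cases hzu : H.Adj z u
    · exact hP4.false_of_P4 hz hzu hu.symm hxu (mt H.adj_symm hx) (mt H.adj_symm hvz)
    · exact h2K2.false_of_2K2 hz hu (mt H.adj_symm hx) hxu (mt H.adj_symm hvz) hzu
  have := Finset.card_le_card hsub
  rw [Finset.card_erase_of_mem ((mem_neighborFinset _ _ _).2 hu), card_neighborFinset_eq_degree,
    card_neighborFinset_eq_degree] at this
  have := H.degree_pos_iff_exists_adj v |>.2 ⟨u, hu⟩
  omega

theorem colorable_cliqueNum_of_indFree_graph2K2_graphP4 [Finite V] (h2K2 : IndFree graph2K2 H)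
    (hP4 : IndFree graphP4 H) : H.Colorable H.cliqueNum := by
  induction hcard : Nat.card V using Nat.strong_induction_on generalizing V with
  | _ n ih =>
  have hsmall : ∀ s : Set V, ∀ x ∉ s, (H.induce s).Colorable (H.induce s).cliqueNum :=
    fun s x hx => ih _ (hcard ▸ Finite.card_subtype_lt hx) (h2K2.induce s) (hP4.induce s) rfl
  cases isEmpty_or_nonempty V
  · exact .of_isEmpty _
  classical
  have := Fintype.ofFinite V
  obtain ⟨v, hv⟩ := H.exists_minimal_degree_vertex
  by_cases hiso : ∃ u, H.Adj v u
  · obtain ⟨u, hu⟩ := hiso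
    have hjoin : ∀ x ∈ H.neighborSet v, ∀ y ∉ H.neighborSet v, H.Adj x y := fun x hx y hy =>
      (adj_of_degree_le_of_not_adj h2K2 hP4 (hv ▸ H.minDegree_le_degree y) hy hx).symm
    exact ((hsmall _ v H.irrefl).add_of_induce (hsmall _ u (Set.notMem_compl_iff.2 hu))).mono
      (cliqueNum_induce_add_cliqueNum_induce_compl_le hjoin)
  · refine Colorable.of_induce_of_forall_not_adj (s := {v}) ?_ ?_
      fun a ha b _ hab => hiso ⟨b, Set.mem_singleton_iff.1 ha ▸ hab⟩
    · exact (H.induce {v}).colorable_of_fintype.mono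
        (by simpa using Nat.succ_le_of_lt H.cliqueNum_pos)
    · exact (hsmall _ v (by simp)).mono (cliqueNum_induce_le _)

end Cograph

section MaximumClique

variable {V : Type*} {G : SimpleGraph V}

theorem IndFree.graphP4_induce_neighborSet (hgem : IndFree graphGem G) (v : V) :
    IndFree graphP4 (G.induce (G.neighborSet v)) := by
  refine ⟨fun e => ?_⟩
  have he : ∀ i j, G.Adj (e i) (e j) ↔ graphP4.Adj i j := fun i j => e.map_adj_iff
  exact hgem.false_of_gem ((he 0 1).2 (by simp [graphP4])) ((he 1 2).2 (by simp [graphP4]))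
    ((he 2 3).2 (by simp [graphP4])) (mt (he 0 2).1 (by simp [graphP4]))
    (mt (he 0 3).1 (by simp [graphP4])) (mt (he 1 3).1 (by simp [graphP4]))
    (e 0).2.symm (e 1).2.symm (e 2).2.symm (e 3).2.symm

theorem SimpleGraph.IsNClique.not_forall_adj_of_cliqueNum [Finite V] [DecidableEq V]
    {K : Finset V} (hK : G.IsNClique G.cliqueNum K) {v a b : V} (hv : v ∈ K) (hab : G.Adj a b)
    (ha : ¬G.Adj v a) (hb : ¬G.Adj v b) : ¬∀ u ∈ K.erase v, G.Adj u a ∧ G.Adj u b := by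
  intro hall
  have hout : ∀ x, ¬G.Adj v x → x ∉ K.erase v := fun x hx hxK =>
    hx (hK.isClique hv (Finset.mem_of_mem_erase hxK) (Finset.ne_of_mem_erase hxK).symm)
  have hclique : G.IsClique (insert a (insert b (K.erase v)) : Finset V) := by
    rw [Finset.coe_insert, Finset.coe_insert, isClique_insert, isClique_insert]
    refine ⟨⟨hK.isClique.subset (by simp), fun u hu _ => (hall u hu).2.symm⟩, ?_⟩
    rintro u (rfl | hu) -
    · exact hab
    · exact (hall u hu).1.symm
  have := hclique.card_le_cliqueNum
  rw [Finset.card_insert_of_notMem (by simp [hab.ne, hout a ha]),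
    Finset.card_insert_of_notMem (hout b hb), Finset.card_erase_of_mem hv, hK.card_eq] at this
  have := hK.card_eq ▸ Finset.card_pos.2 ⟨v, hv⟩
  omega

theorem adj_iff_not_adj_of_mem_erase [Finite V] [DecidableEq V] (h2K2 : IndFree graph2K2 G)
    (hgem : IndFree graphGem G) {K : Finset V} (hK : G.IsNClique G.cliqueNum K) {v u₀ a b : V}
    (hv : v ∈ K) (hu₀ : u₀ ∈ K.erase v) (hab : G.Adj a b) (ha : ¬G.Adj v a) (hb : ¬G.Adj v b) :
    G.Adj u₀ a ↔ ¬G.Adj u₀ b := by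
  have hKv : ∀ u ∈ K.erase v, G.Adj v u := fun u hu =>
    hK.isClique hv (Finset.mem_of_mem_erase hu) (Finset.ne_of_mem_erase hu).symm
  have hcover : ∀ u ∈ K.erase v, G.Adj u a ∨ G.Adj u b := fun u hu => by
    by_contra h
    rw [not_or] at h
    exact h2K2.false_of_2K2 (hKv u hu) hab ha hb h.1 h.2
  refine ⟨fun h₀a h₀b => hK.not_forall_adj_of_cliqueNum hv hab ha hb fun u hu => ?_,
    (hcover u₀ hu₀).resolve_right⟩
  obtain rfl | hne := eq_or_ne u u₀
  · exact ⟨h₀a, h₀b⟩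
  have hu₀u : G.Adj u u₀ := hK.isClique (Finset.mem_of_mem_erase hu)
    (Finset.mem_of_mem_erase hu₀) hne
  have hvu₀ := hKv u₀ hu₀
  rcases hcover u hu with hua | hub
  · exact ⟨hua, by_contra fun hub => hgem.false_of_gem (hKv u hu) hua hab ha hb hub
      hvu₀ hu₀u h₀a.symm h₀b.symm⟩
  · exact ⟨by_contra fun hua => hgem.false_of_gem (hKv u hu) hub hab.symm hb ha hua
      hvu₀ hu₀u h₀b.symm h₀a.symm, hub⟩

theorem colorable_two_induce_compl_neighborSet [Finite V] (h2K2 : IndFree graph2K2 G)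
    (hgem : IndFree graphGem G) {K : Finset V} (hK : G.IsNClique G.cliqueNum K) {v : V}
    (hv : v ∈ K) : (G.induce (G.neighborSet v)ᶜ).Colorable 2 := by
  classical
  by_cases hK₁ : ∃ u₀, u₀ ∈ K.erase v
  · obtain ⟨u₀, hu₀⟩ := hK₁
    let c : (G.induce (G.neighborSet v)ᶜ).Coloring Bool :=
      Coloring.mk (fun x => decide (G.Adj u₀ x)) fun {x y} hxy => by
        have := adj_iff_not_adj_of_mem_erase h2K2 hgem hK hv hu₀ hxy x.2 y.2
        simp only [ne_eq, decide_eq_decide]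
        tauto
    simpa using c.colorable
  · refine ⟨Coloring.mk (fun _ => 0) fun {x y} hxy => ?_⟩
    exact (hK.not_forall_adj_of_cliqueNum hv hxy x.2 y.2 fun u hu => (hK₁ ⟨u, hu⟩).elim).elim

end MaximumClique

theorem colorable_cliqueNum_add_one_of_indFree_graph2K2_graphGem {V : Type*} [Finite V]
    {G : SimpleGraph V} (h2K2 : IndFree graph2K2 G) (hgem : IndFree graphGem G) :
    G.Colorable (G.cliqueNum + 1) := by
  cases isEmpty_or_nonempty V
  · exact .of_isEmpty _
  obtain ⟨K, hK⟩ := G.exists_isNClique_cliqueNum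
  obtain ⟨v, hv⟩ : K.Nonempty := by
    rw [← Finset.card_pos, hK.card_eq]
    exact G.cliqueNum_pos
  have hN := colorable_cliqueNum_of_indFree_graph2K2_graphP4 (h2K2.induce _)
    (hgem.graphP4_induce_neighborSet v)
  refine (hN.add_of_induce (colorable_two_induce_compl_neighborSet h2K2 hgem hK hv)).mono ?_
  have := G.cliqueNum_induce_neighborSet_lt v
  omega

/-- Every `(2K₂, K₁ + P₄)`-free graph `G` satisfies `χ(G) ≤ ω(G) + 2`. -/
theorem stmt1 {V : Type*} [Fintype V] (G : SimpleGraph V)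
    (h1 : IndFree graph2K2 G) (h2 : IndFree graphGem G) :
    G.chromaticNumber ≤ ((G.cliqueNum + 2 : ℕ) : ℕ∞) :=
  ((colorable_cliqueNum_add_one_of_indFree_graph2K2_graphGem h1 h2).mono
    (Nat.le_succ _)).chromaticNumber_le
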